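/- arXiv:math/0209110 — 4 statements merged into one kernel-verified Lean document; each statement's English description precedes it below -/
import Mathlib

section
/- Let $R$ be a (not necessarily commutative) ring and let $d : R \to R$ be an additive map satisfying the Leibniz rule $d(xy) = d(x)y + x\,d(y)$ for all $x, y \in R$. Then for every $L \in R$ and every natural number $n$, $d(L^{n+1}) = \sum_{k=0}^{n} (-1)^k \binom{n+1}{k+1}\, \mathrm{ad}(L)^k\big(L^{n-k}\, d(L)\big)$, where $\mathrm{ad}(L)$ denotes the map $x \mapsto Lx - xL$ and $\mathrm{ad}(L)^k$ its $k$-fold iterate. -/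
private lemma ad_iter_Lmul {R : Type*} [Ring R] (L : R) (k : ℕ) (y : R) :
    (fun x : R => L * x - x * L)^[k] (L * y) =
      L * (fun x : R => L * x - x * L)^[k] y := by
  induction k generalizing y with
  | zero => rfl
  | succ k ih =>
    rw [Function.iterate_succ_apply, Function.iterate_succ_apply]
    have h : L * (L * y) - L * y * L = L * (L * y - y * L) := by noncomm_ring
    rw [h, ih]

/-- For a ring `R` with a derivation `d` (an additive map satisfying the
Leibniz rule), every `L ∈ R` and `n : ℕ` satisfy
`d(L^(n+1)) = ∑_{k=0}^{n} (-1)^k (n+1 choose k+1) ad(L)^k (L^(n-k) d(L))`,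
where `ad(L) x = L*x - x*L`. -/
theorem toda_deriv_pow_formula {R : Type*} [Ring R] (d : R → R)
    (hadd : ∀ x y : R, d (x + y) = d x + d y)
    (hleib : ∀ x y : R, d (x * y) = d x * y + x * d y)
    (L : R) (n : ℕ) :
    d (L ^ (n + 1)) =
      ∑ k ∈ Finset.range (n + 1),
        ((-1 : ℤ) ^ k * ((n + 1).choose (k + 1) : ℤ)) •
          (fun x : R => L * x - x * L)^[k] (L ^ (n - k) * d L) := by
  set A : R → R := fun x : R => L * x - x * L with hA
  induction n with
  | zero =>
    simp [pow_one]
  | succ n ih =>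
    have hd : d (L ^ (n + 1 + 1)) = d (L ^ (n + 1)) * L + L ^ (n + 1) * d L := by
      rw [pow_succ, hleib]
    rw [hd, ih, Finset.sum_mul]
    have step : ∀ k ∈ Finset.range (n + 1),
        (((-1 : ℤ) ^ k * ((n + 1).choose (k + 1) : ℤ)) • A^[k] (L ^ (n - k) * d L)) * L
        = ((-1 : ℤ) ^ k * ((n + 1).choose (k + 1) : ℤ)) • A^[k] (L ^ (n + 1 - k) * d L)
          - ((-1 : ℤ) ^ k * ((n + 1).choose (k + 1) : ℤ)) • A^[k + 1] (L ^ (n - k) * d L) := by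
      intro k hk
      have hkn : k ≤ n := Nat.lt_succ_iff.mp (Finset.mem_range.mp hk)
      have h1 : A^[k] (L ^ (n - k) * d L) * L
          = L * A^[k] (L ^ (n - k) * d L) - A^[k + 1] (L ^ (n - k) * d L) := by
        rw [Function.iterate_succ_apply']
        simp [hA]
      have h2 : L * A^[k] (L ^ (n - k) * d L) = A^[k] (L ^ (n + 1 - k) * d L) := by
        have he : n + 1 - k = n - k + 1 := by omega
        rw [he, pow_succ', mul_assoc, ad_iter_Lmul]
      rw [smul_mul_assoc, h1, h2, smul_sub]
    rw [Finset.sum_congr rfl step, Finset.sum_sub_distrib]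
    -- Now: ∑ c n k • A^[k](L^(n+1-k) dL) - ∑ c n k • A^[k+1](L^(n-k) dL) + L^(n+1) dL
    --    = ∑_{k < n+2} c (n+1) k • A^[k](L^(n+1-k) dL)
    rw [Finset.sum_range_succ' (fun k =>
      ((-1 : ℤ) ^ k * ((n + 1 + 1).choose (k + 1) : ℤ)) • A^[k] (L ^ (n + 1 - k) * d L)) (n + 1)]
    rw [Finset.sum_range_succ' (fun k =>
      ((-1 : ℤ) ^ k * ((n + 1).choose (k + 1) : ℤ)) • A^[k] (L ^ (n + 1 - k) * d L)) n]
    rw [Finset.sum_range_succ (fun k =>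
      ((-1 : ℤ) ^ k * ((n + 1).choose (k + 1) : ℤ)) • A^[k + 1] (L ^ (n - k) * d L)) n]
    rw [Finset.sum_range_succ (fun k =>
      ((-1 : ℤ) ^ (k + 1) * ((n + 1 + 1).choose (k + 1 + 1) : ℤ)) •
        A^[k + 1] (L ^ (n + 1 - (k + 1)) * d L)) n]
    have hmid : ∀ k ∈ Finset.range n,
        ((-1 : ℤ) ^ (k + 1) * ((n + 1).choose (k + 1 + 1) : ℤ)) •
            A^[k + 1] (L ^ (n + 1 - (k + 1)) * d L)
          - ((-1 : ℤ) ^ k * ((n + 1).choose (k + 1) : ℤ)) • A^[k + 1] (L ^ (n - k) * d L)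
        = ((-1 : ℤ) ^ (k + 1) * ((n + 1 + 1).choose (k + 1 + 1) : ℤ)) •
            A^[k + 1] (L ^ (n + 1 - (k + 1)) * d L) := by
      intro k hk
      have he : n + 1 - (k + 1) = n - k := by omega
      rw [he, ← sub_smul]
      congr 1
      have : (n + 1 + 1).choose (k + 1 + 1) = (n + 1).choose (k + 1) + (n + 1).choose (k + 2) :=
        Nat.choose_succ_succ (n + 1) (k + 1)
      rw [this]
      push_cast
      ring
    have hsum : ∑ k ∈ Finset.range n,
          ((-1 : ℤ) ^ (k + 1) * ((n + 1).choose (k + 1 + 1) : ℤ)) •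
            A^[k + 1] (L ^ (n + 1 - (k + 1)) * d L)
        - ∑ k ∈ Finset.range n,
          ((-1 : ℤ) ^ k * ((n + 1).choose (k + 1) : ℤ)) • A^[k + 1] (L ^ (n - k) * d L)
        = ∑ k ∈ Finset.range n,
          ((-1 : ℤ) ^ (k + 1) * ((n + 1 + 1).choose (k + 1 + 1) : ℤ)) •
            A^[k + 1] (L ^ (n + 1 - (k + 1)) * d L) := by
      rw [← Finset.sum_sub_distrib]
      exact Finset.sum_congr rfl hmid
    -- edge terms
    have h0 : ((-1 : ℤ) ^ 0 * ((n + 1).choose (0 + 1) : ℤ)) • A^[0] (L ^ (n + 1 - 0) * d L)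
          + L ^ (n + 1) * d L
        = ((-1 : ℤ) ^ 0 * ((n + 1 + 1).choose (0 + 1) : ℤ)) • A^[0] (L ^ (n + 1 - 0) * d L) := by
      simp only [pow_zero, one_mul, Function.iterate_zero_apply, Nat.sub_zero,
        Nat.choose_one_right]
      rw [← add_one_zsmul]
      congr 1
      norm_num [Nat.choose_one_right]
    have hlast : -(((-1 : ℤ) ^ n * ((n + 1).choose (n + 1) : ℤ)) • A^[n + 1] (L ^ (n - n) * d L))
        = ((-1 : ℤ) ^ (n + 1) * ((n + 1 + 1).choose (n + 1 + 1) : ℤ)) •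
            A^[n + 1] (L ^ (n + 1 - (n + 1)) * d L) := by
      have he : n + 1 - (n + 1) = n - n := by omega
      rw [he, ← neg_smul]
      congr 1
      simp [pow_succ]
    -- assemble
    linear_combination (norm := abel) hsum + h0 + hlast
end

section
/- Let $A$ be a commutative ring and $\tau : A \to A$ a ring automorphism. For a finitely supported function $a : \mathbb{Z} \to A$, write $a_i$ for its value at $i$. For finitely supported $a, b : \mathbb{Z} \to A$ define the residue of the product of the associated difference operators by $\mathrm{res}(a,b) = \sum_{i \in \mathbb{Z}} \tau^i(a_i\, b_{-i})$. For $k \ge 0$ let $[k]_\tau = \sum_{j=1}^{k} \tau^{k+1-2j}$ (an additive map $A \to A$, with $[0]_\tau = 0$), and for $k < 0$ let $[k]_\tau = -[-k]_\tau$. Then $\mathrm{res}(a,b) - \mathrm{res}(b,a) = (\tau - \tau^{-1})\Big(\sum_{k \in \mathbb{Z}} [k]_\tau(a_k\, b_{-k})\Big)$. In particular, the residue of a commutator of difference operators lies in the image of $\tau - \tau^{-1}$. -/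
/-- The symmetrized geometric-sum operator `[k]_τ`: for `k ≥ 0`,
`[k]_τ x = ∑_{j=1}^{k} τ^(k+1-2j) x`, and `[k]_τ = -[-k]_τ` for `k < 0`. -/
def todaBracket {A : Type*} [CommRing A] (τ : A ≃+* A) (k : ℤ) (x : A) : A :=
  if 0 ≤ k then ∑ j ∈ Finset.range k.toNat, (τ ^ (k - 1 - 2 * (j : ℤ))) x
  else - ∑ j ∈ Finset.range (-k).toNat, (τ ^ (-k - 1 - 2 * (j : ℤ))) x


lemma appShift {A : Type*} [CommRing A] (τ : A ≃+* A) (n : ℤ) (x : A) :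
    τ ((τ ^ n) x) = (τ ^ (n + 1)) x := by
  rw [add_comm, zpow_add, zpow_one]; rfl

lemma appShift' {A : Type*} [CommRing A] (τ : A ≃+* A) (n : ℤ) (x : A) :
    τ.symm ((τ ^ n) x) = (τ ^ (n - 1)) x := by
  rw [sub_eq_add_neg, add_comm, zpow_add]
  simp [zpow_neg]

lemma todaKeyNat {A : Type*} [CommRing A] (τ : A ≃+* A) (m : ℕ) (x : A) :
    (τ ^ (m : ℤ)) x - (τ ^ (-(m : ℤ))) x =
      τ (todaBracket τ m x) - τ.symm (todaBracket τ m x) := by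
  have h0 : (0:ℤ) ≤ m := Int.ofNat_nonneg m
  rw [todaBracket, if_pos h0, map_sum, map_sum, ← Finset.sum_sub_distrib]
  have : ∀ j ∈ Finset.range ((m:ℤ)).toNat,
      τ ((τ ^ ((m:ℤ) - 1 - 2 * (j:ℤ))) x) - τ.symm ((τ ^ ((m:ℤ) - 1 - 2 * (j:ℤ))) x)
      = (fun j : ℕ => (τ ^ ((m:ℤ) - 2 * (j:ℤ))) x) j
        - (fun j : ℕ => (τ ^ ((m:ℤ) - 2 * (j:ℤ))) x) (j+1) := by
    intro j _
    rw [appShift, appShift']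
    simp only
    rw [show (m:ℤ) - 1 - 2*(j:ℤ) + 1 = (m:ℤ) - 2*(j:ℤ) by ring,
      show (m:ℤ) - 1 - 2*(j:ℤ) - 1 = (m:ℤ) - 2*((j:ℤ)+1) by ring]
    push_cast
    ring_nf
  rw [Finset.sum_congr rfl this, Finset.sum_range_sub']
  simp only [Int.toNat_natCast, Nat.cast_zero, mul_zero, sub_zero]
  congr 1
  rw [show (m:ℤ) - 2*(m:ℤ) = -(m:ℤ) by ring]

lemma todaKey {A : Type*} [CommRing A] (τ : A ≃+* A) (k : ℤ) (x : A) :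
    (τ ^ k) x - (τ ^ (-k)) x =
      τ (todaBracket τ k x) - τ.symm (todaBracket τ k x) := by
  rcases le_or_gt 0 k with h | h
  · obtain ⟨m, rfl⟩ := Int.eq_ofNat_of_zero_le h
    exact todaKeyNat τ m x
  · obtain ⟨m, rfl⟩ : ∃ m : ℕ, k = -(m:ℤ) := ⟨(-k).toNat, by omega⟩
    have hneg : todaBracket τ (-(m:ℤ)) x = - todaBracket τ (m:ℤ) x := by
      rw [todaBracket, todaBracket, if_neg (by omega), if_pos (Int.ofNat_nonneg m)]
      simp
    rw [hneg, neg_neg, map_neg, map_neg]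
    have := todaKeyNat τ m x
    linear_combination -this

/-- for finitely supported `a b : ℤ → A`, with
`res(a,b) = ∑_i τ^i (a_i b_{-i})` (the residue of the product of the associated
difference operators), one has
`res(a,b) - res(b,a) = (τ - τ⁻¹)(∑_k [k]_τ (a_k b_{-k}))`. -/
theorem toda_residue_commutator {A : Type*} [CommRing A] (τ : A ≃+* A)
    (a b : ℤ →₀ A) :
    (∑ i ∈ a.support, (τ ^ i) (a i * b (-i))) -
      (∑ i ∈ b.support, (τ ^ i) (b i * a (-i))) =
    τ (∑ k ∈ a.support, todaBracket τ k (a k * b (-k))) -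
      τ.symm (∑ k ∈ a.support, todaBracket τ k (a k * b (-k))) := by

  have hre : (∑ i ∈ b.support, (τ ^ i) (b i * a (-i)))
      = ∑ i ∈ b.support.image (Neg.neg : ℤ → ℤ), (τ ^ (-i)) (a i * b (-i)) := by
    rw [Finset.sum_image (by intro x _ y _ h; exact neg_injective h)]
    apply Finset.sum_congr rfl
    intro i _
    simp [mul_comm]
  -- extend both sums to the union
  set t := a.support ∪ b.support.image (Neg.neg : ℤ → ℤ) with ht
  have h1 : (∑ i ∈ a.support, (τ ^ i) (a i * b (-i)))
      = ∑ i ∈ t, (τ ^ i) (a i * b (-i)) := by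
    apply Finset.sum_subset Finset.subset_union_left
    intro i _ hi
    simp [Finsupp.notMem_support_iff.mp hi]
  have h2 : (∑ i ∈ b.support.image (Neg.neg : ℤ → ℤ), (τ ^ (-i)) (a i * b (-i)))
      = ∑ i ∈ t, (τ ^ (-i)) (a i * b (-i)) := by
    apply Finset.sum_subset Finset.subset_union_right
    intro i _ hi
    have : b (-i) = 0 := by
      by_contra hb
      exact hi (Finset.mem_image.mpr ⟨-i, Finsupp.mem_support_iff.mpr hb, neg_neg i⟩)
    simp [this]
  have h3 : (∑ k ∈ a.support, todaBracket τ k (a k * b (-k)))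
      = ∑ k ∈ t, todaBracket τ k (a k * b (-k)) := by
    apply Finset.sum_subset Finset.subset_union_left
    intro i _ hi
    have : a i = 0 := Finsupp.notMem_support_iff.mp hi
    rw [this, zero_mul, todaBracket]
    split <;> simp
  rw [hre, h1, h2, h3, ← Finset.sum_sub_distrib, map_sum, map_sum,
    ← Finset.sum_sub_distrib]
  exact Finset.sum_congr rfl fun k _ => todaKey τ k _
end

section
/- Let $A$ be a commutative ring and $\tau : A \to A$ a ring automorphism. Suppose $X, P \in A$ and $c_0, \dots, c_n \in A$ satisfy the two equations $X = \tau(P) + \sum_{k=0}^{n} \tau^{-k}(c_k)$ and $X = \tau^{-1}(P) + \sum_{k=0}^{n} \tau^{k}(c_k)$. Then $(\tau - \tau^{-1})(X) = (\tau - \tau^{-1})\Big(\sum_{k=0}^{n} [k+1]_\tau(c_k)\Big)$, where $[m]_\tau = \sum_{j=1}^{m} \tau^{m+1-2j}$. -/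
lemma aux_comp1 {A : Type*} [CommRing A] (τ : A ≃+* A) (z : ℤ) (x : A) :
    τ ((τ ^ z) x) = (τ ^ (z + 1)) x := by
  rw [show z + 1 = 1 + z by ring, zpow_add, zpow_one]
  rfl

lemma aux_comp2 {A : Type*} [CommRing A] (τ : A ≃+* A) (z : ℤ) (x : A) :
    τ.symm ((τ ^ z) x) = (τ ^ (z - 1)) x := by
  rw [show z - 1 = -1 + z by ring, zpow_add, zpow_neg_one]
  rfl

/-- if `X = τ(P) + ∑_{k=0}^n τ^(-k)(c_k)` and
`X = τ⁻¹(P) + ∑_{k=0}^n τ^k(c_k)`, then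
`(τ - τ⁻¹)(X) = (τ - τ⁻¹)(∑_{k=0}^n [k+1]_τ(c_k))`, where
`[m]_τ = ∑_{j=1}^m τ^(m+1-2j)`, i.e. `[k+1]_τ(x) = ∑_{j=0}^{k} τ^(k-2j)(x)`. -/
theorem toda_residue_lemma_core {A : Type*} [CommRing A] (τ : A ≃+* A)
    (n : ℕ) (X P : A) (c : ℕ → A)
    (h1 : X = τ P + ∑ k ∈ Finset.range (n + 1), (τ ^ (-(k : ℤ))) (c k))
    (h2 : X = τ.symm P + ∑ k ∈ Finset.range (n + 1), (τ ^ (k : ℤ)) (c k)) :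
    τ X - τ.symm X =
      τ (∑ k ∈ Finset.range (n + 1), ∑ j ∈ Finset.range (k + 1),
          (τ ^ ((k : ℤ) - 2 * (j : ℤ))) (c k)) -
      τ.symm (∑ k ∈ Finset.range (n + 1), ∑ j ∈ Finset.range (k + 1),
          (τ ^ ((k : ℤ) - 2 * (j : ℤ))) (c k)) := by
  have hX1 : τ X = P + ∑ k ∈ Finset.range (n + 1), (τ ^ ((k : ℤ) + 1)) (c k) := by
    rw [h2, map_add, map_sum, RingEquiv.apply_symm_apply]
    simp only [aux_comp1]
  have hX2 : τ.symm X = P + ∑ k ∈ Finset.range (n + 1), (τ ^ (-(k : ℤ) - 1)) (c k) := by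
    rw [h1, map_add, map_sum, RingEquiv.symm_apply_apply]
    simp only [aux_comp2]
  rw [hX1, hX2, map_sum, map_sum]
  simp only [map_sum, aux_comp1, aux_comp2]
  rw [add_sub_add_left_eq_sub, ← Finset.sum_sub_distrib, ← Finset.sum_sub_distrib]
  refine Finset.sum_congr rfl fun k _ => ?_
  rw [← Finset.sum_sub_distrib]
  have : ∀ j ∈ Finset.range (k + 1),
      (τ ^ ((k : ℤ) - 2 * j + 1)) (c k) - (τ ^ ((k : ℤ) - 2 * j - 1)) (c k)
        = (fun j : ℕ => (τ ^ ((k : ℤ) - 2 * j + 1)) (c k)) j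
          - (fun j : ℕ => (τ ^ ((k : ℤ) - 2 * j + 1)) (c k)) (j + 1) := by
    intro j _
    simp only []
    congr 2
    push_cast
    ring
  rw [Finset.sum_congr rfl this, Finset.sum_range_sub']
  push_cast
  ring_nf
end

section
/- Let $M$ be a module over the polynomial ring $\mathbb{Q}[\t]$, and let $\delta_n, \bar\delta_n \in M$ for $n \ge 1$ and $\partial_{k,Q}, \partial_{k,P} \in M$ for $k \ge 0$ satisfy, as identities of formal power series in $z$ with coefficients in $M$ (where for each integer $m \ge 1$ the series $m + z\t$ is invertible in $\mathbb{Q}[\t][[z]]$): $\sum_{k\ge0} z^{k+1}\,\partial_{k,Q} = \sum_{n\ge1} z^n\,\Big(\prod_{m=1}^{n}(m+z\t)\Big)^{-1}\delta_n$ and $\sum_{k\ge0} z^{k+1}\,(\partial_{k,Q} - \t\,\partial_{k,P}) = \sum_{n\ge1} z^n\,\Big(\prod_{m=1}^{n}(m-z\t)\Big)^{-1}\bar\delta_n$. Set $\delta_0 = \bar\delta_0 = 0$, and let $c_k = 1 + \tfrac12 + \cdots + \tfrac1k$ (with $c_0 = 0$). Then for every $k \ge 0$: $\t\,\partial_{k,P}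 \;-\; \tfrac{1}{(k+1)!}\,(\delta_{k+1} - \bar\delta_{k+1}) \;+\; \t\,\tfrac{c_k}{k!}\,(\delta_k + \bar\delta_k) \;\in\; \t^2 M$. -/
/-!
Substituting `z ↦ 𝗍 z` maps the rational series `∏_{m ≤ n} (m + ε z)` to `∏_{m ≤ n} (m + ε z 𝗍)`,
so the `z^r`-coefficient of the inverse of the latter is `𝗍^r` times a rational number. Modulo
`𝗍²` only `r = 0` and `r = 1` survive in the `z^{k+1}`-coefficient of the two generating-function
identities; these coefficients are `1/n!` and `-ε H_n / n!` (the logarithmic derivative of the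
product at `z = 0` is `ε H_n`). Subtracting the two identities leaves `𝗍 ∂_{k,P}` modulo `𝗍²`.
-/

open PowerSeries Polynomial

/-- The product `(1 + εz𝗍)(2 + εz𝗍)⋯(n + εz𝗍)` in `ℚ[𝗍][[z]]` with sign `ε = ±1`,
where `𝗍 = Polynomial.X` and `z = PowerSeries.X`.  Each factor `m ± z𝗍` (for `m ≥ 1`)
is invertible in `ℚ[𝗍][[z]]`, so `Ring.inverse` of this product is its genuine
inverse. -/
noncomputable def todaSignedFactorialProd (ε : ℤ) (n : ℕ) :
    PowerSeries (Polynomial ℚ) :=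
  ∏ m ∈ Finset.range n,
    (PowerSeries.C ((m + 1 : ℕ) : Polynomial ℚ) +
      (ε : PowerSeries (Polynomial ℚ)) *
        PowerSeries.X * PowerSeries.C Polynomial.X)

open scoped Pointwise

namespace PowerSeries

-- When `constantCoeff φ = 0` both sides are junk zeros: `φ⁻¹ = 0` and division by `0`.
theorem coeff_one_inv {K : Type*} [Field K] (φ : K⟦X⟧) :
    coeff 1 φ⁻¹ = -coeff 1 φ / constantCoeff φ ^ 2 := by
  rw [coeff_inv, if_neg one_ne_zero,
    show Finset.HasAntidiagonal.antidiagonal 1 = {(0, 1), (1, 0)} from rfl,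
    Finset.sum_pair (by decide)]
  simp only [lt_irrefl, if_false, zero_lt_one, if_true, zero_add, coeff_zero_eq_constantCoeff,
    constantCoeff_inv]
  ring

noncomputable def shiftedFactorialSeries {R : Type*} [CommSemiring R] (ε : R) (n : ℕ) :
    R⟦X⟧ :=
  ∏ m ∈ Finset.range n, (C ((m + 1 : ℕ) : R) + C ε * X)

section shiftedFactorialSeries

theorem constantCoeff_shiftedFactorialSeries {R : Type*} [CommSemiring R] (ε : R) (n : ℕ) :
    constantCoeff (shiftedFactorialSeries ε n) = n.factorial := by
  simp [shiftedFactorialSeries, ← Finset.prod_range_add_one_eq_factorial]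

variable {K : Type*} [Field K]

theorem constantCoeff_shiftedFactorialSeries_inv (ε : K) (n : ℕ) :
    constantCoeff (shiftedFactorialSeries ε n)⁻¹ = (n.factorial : K)⁻¹ := by
  rw [constantCoeff_inv, constantCoeff_shiftedFactorialSeries]

variable [CharZero K]

theorem coeff_one_shiftedFactorialSeries (ε : K) (n : ℕ) :
    coeff 1 (shiftedFactorialSeries ε n) = ε * n.factorial * harmonic n := by
  induction n with
  | zero => simp [shiftedFactorialSeries]
  | succ n ih =>
    rw [shiftedFactorialSeries, Finset.prod_range_succ, ← shiftedFactorialSeries, coeff_one_mul,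
      ih, constantCoeff_shiftedFactorialSeries, harmonic_succ]
    simp only [map_add, coeff_C, one_ne_zero, if_false, coeff_C_mul, coeff_one_X, constantCoeff_C,
      map_mul, constantCoeff_X]
    push_cast [Nat.factorial_succ]
    field_simp
    ring

theorem coeff_one_shiftedFactorialSeries_inv (ε : K) (n : ℕ) :
    coeff 1 (shiftedFactorialSeries ε n)⁻¹ = -ε * harmonic n / n.factorial := by
  have : (n.factorial : K) ≠ 0 := Nat.cast_ne_zero.2 n.factorial_ne_zero
  rw [coeff_one_inv, coeff_one_shiftedFactorialSeries, constantCoeff_shiftedFactorialSeries]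
  field_simp

end shiftedFactorialSeries

end PowerSeries

theorem sum_range_pow_mul_smul_sModEq {R M : Type*} [CommRing R] [AddCommGroup M] [Module R M]
    (x : R) (a : ℕ → ℕ → R) (v : ℕ → M) (k : ℕ) :
    ∑ n ∈ Finset.range (k + 2), (x ^ (k + 1 - n) * a n (k + 1 - n)) • v n ≡
      a (k + 1) 0 • v (k + 1) + (x * a k 1) • v k [SMOD x ^ 2 • (⊤ : Submodule R M)] := by
  have hhigh : ∑ n ∈ Finset.range k, (x ^ (k + 1 - n) * a n (k + 1 - n)) • v n ∈
      x ^ 2 • (⊤ : Submodule R M) := by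
    refine Submodule.sum_mem _ fun n hn => (Submodule.mem_smul_pointwise_iff_exists _ _ _).2
      ⟨(x ^ (k - 1 - n) * a n (k + 1 - n)) • v n, trivial, ?_⟩
    have hexp : 2 + (k - 1 - n) = k + 1 - n := by rw [Finset.mem_range] at hn; omega
    rw [smul_smul, ← mul_assoc, ← pow_add, hexp]
  rw [Finset.sum_range_succ, Finset.sum_range_succ, SModEq.sub_mem]
  convert hhigh using 1
  simp only [Nat.sub_self, pow_zero, pow_one, one_mul, show k + 1 - k = 1 by omega]
  abel

theorem todaSignedFactorialProd_eq_rescale (ε : ℤ) (n : ℕ) :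
    todaSignedFactorialProd ε n =
      rescale Polynomial.X (map Polynomial.C (shiftedFactorialSeries (ε : ℚ) n)) := by
  rw [todaSignedFactorialProd, shiftedFactorialSeries, map_prod, map_prod]
  refine Finset.prod_congr rfl fun m _ => ?_
  simp only [map_add, map_mul, PowerSeries.map_X, rescale_X, map_natCast, map_intCast]
  ring

theorem coeff_inverse_todaSignedFactorialProd (ε : ℤ) (n r : ℕ) :
    coeff r (Ring.inverse (todaSignedFactorialProd ε n)) =
      Polynomial.X ^ r * Polynomial.C (coeff r (shiftedFactorialSeries (ε : ℚ) n)⁻¹) := by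
  set g : ℚ⟦X⟧ →+* ℚ[X]⟦X⟧ := (rescale Polynomial.X).comp (map Polynomial.C)
  set f := shiftedFactorialSeries (ε : ℚ) n
  have hf : f⁻¹ * f = 1 := PowerSeries.inv_mul_cancel f (by
    rw [constantCoeff_shiftedFactorialSeries]; exact Nat.cast_ne_zero.2 n.factorial_ne_zero)
  have hgf : g f⁻¹ * g f = 1 := by rw [← map_mul, hf, map_one]
  have hinv : Ring.inverse (g f) = g f⁻¹ := calc
    Ring.inverse (g f) = g f⁻¹ * g f * Ring.inverse (g f) := by rw [hgf, one_mul]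
    _ = g f⁻¹ := Ring.mul_inverse_cancel_right _ _ (IsUnit.of_mul_eq_one_right _ hgf)
  rw [todaSignedFactorialProd_eq_rescale, ← RingHom.comp_apply, hinv, RingHom.comp_apply,
    coeff_rescale, PowerSeries.coeff_map]

theorem sum_coeff_inverse_todaSignedFactorialProd_smul_sModEq {M : Type*} [AddCommGroup M]
    [Module ℚ[X] M] (ε : ℤ) (v : ℕ → M) (hv0 : v 0 = 0) (k : ℕ) :
    ∑ n ∈ Finset.Icc 1 (k + 1),
        coeff (k + 1 - n) (Ring.inverse (todaSignedFactorialProd ε n)) • v n ≡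
      Polynomial.C ((k + 1).factorial : ℚ)⁻¹ • v (k + 1) +
        (Polynomial.X * Polynomial.C (-ε * harmonic k / k.factorial)) • v k
      [SMOD (Polynomial.X ^ 2 : ℚ[X]) • (⊤ : Submodule ℚ[X] M)] := by
  have hIcc : Finset.range (k + 2) = insert 0 (Finset.Icc 1 (k + 1)) := by
    ext n; simp only [Finset.mem_range, Finset.mem_insert, Finset.mem_Icc]; omega
  have hsum := sum_range_pow_mul_smul_sModEq Polynomial.X
    (fun n r => Polynomial.C (coeff r (shiftedFactorialSeries (ε : ℚ) n)⁻¹)) v k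
  simp only [hIcc, Finset.sum_insert (show 0 ∉ Finset.Icc 1 (k + 1) by simp), hv0, smul_zero,
    zero_add, ← coeff_inverse_todaSignedFactorialProd, coeff_zero_eq_constantCoeff,
    constantCoeff_shiftedFactorialSeries_inv, coeff_one_shiftedFactorialSeries_inv,
    Rat.cast_id] at hsum
  exact hsum

/-- for a module `M` over `ℚ[𝗍]`, if the flows satisfy the
coefficientwise power-series identities
`∑_{k≥0} z^{k+1} ∂_{k,Q} = ∑_{n≥1} z^n ((1+z𝗍)⋯(n+z𝗍))⁻¹ δ_n` and
`∑_{k≥0} z^{k+1} (∂_{k,Q} - 𝗍 ∂_{k,P}) = ∑_{n≥1} z^n ((1-z𝗍)⋯(n-z𝗍))⁻¹ δ̄_n`,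
with `δ_0 = δ̄_0 = 0`, then for every `k ≥ 0`
`𝗍 ∂_{k,P} - (1/(k+1)!)(δ_{k+1} - δ̄_{k+1}) + 𝗍 (c_k/k!)(δ_k + δ̄_k) ∈ 𝗍² M`,
where `c_k = 1 + 1/2 + ⋯ + 1/k` is the harmonic number. -/
theorem toda_descendent_P_flow (M : Type*) [AddCommGroup M]
    [Module (Polynomial ℚ) M] (dQ dP : ℕ → M) (δ δb : ℕ → M)
    (hδ0 : δ 0 = 0) (hδb0 : δb 0 = 0)
    (hQ : ∀ j : ℕ, (if j = 0 then (0 : M) else dQ (j - 1)) =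
      ∑ n ∈ Finset.Icc 1 j,
        (PowerSeries.coeff (j - n)
          (Ring.inverse (todaSignedFactorialProd 1 n))) • δ n)
    (hQP : ∀ j : ℕ, (if j = 0 then (0 : M)
        else dQ (j - 1) - (Polynomial.X : Polynomial ℚ) • dP (j - 1)) =
      ∑ n ∈ Finset.Icc 1 j,
        (PowerSeries.coeff (j - n)
          (Ring.inverse (todaSignedFactorialProd (-1) n))) • δb n) :
    ∀ k : ℕ, ∃ m : M,
      (Polynomial.X : Polynomial ℚ) • dP k -
        Polynomial.C (((k + 1).factorial : ℚ)⁻¹) • (δ (k + 1) - δb (k + 1)) +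
        (Polynomial.X *
          Polynomial.C ((∑ j ∈ Finset.range k, ((j : ℚ) + 1)⁻¹) / (k.factorial : ℚ)))
          • (δ k + δb k) =
        ((Polynomial.X : Polynomial ℚ) ^ 2) • m := by
  intro k
  have hdQ := hQ (k + 1)
  have hdQP := hQP (k + 1)
  simp only [Nat.add_one_ne_zero, if_false, Nat.add_sub_cancel] at hdQ hdQP
  have hδ := sum_coeff_inverse_todaSignedFactorialProd_smul_sModEq 1 δ hδ0 k
  have hδb := sum_coeff_inverse_todaSignedFactorialProd_smul_sModEq (-1) δb hδb0 k
  rw [← hdQ] at hδ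
  rw [← hdQP] at hδb
  obtain ⟨m, -, hm⟩ :=
    (Submodule.mem_smul_pointwise_iff_exists _ _ _).1 (SModEq.sub_mem.1 (hδ.sub hδb))
  refine ⟨m, ?_⟩
  have hH : ∑ j ∈ Finset.range k, ((j : ℚ) + 1)⁻¹ = harmonic k := by simp [harmonic]
  rw [hm, hH]
  simp only [Int.cast_one, Int.cast_neg, neg_neg, neg_mul, one_mul, neg_div, map_neg, mul_neg]
  module
end
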